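/- arXiv:1504.06122 — 5 statements merged into one kernel-verified Lean document; each statement's English description precedes it below -/
import Mathlib

section
/- Let 0 < ε ≤ 1/2, let M ∈ ℝ^{n×d}, and let Π ∈ ℝ^{k×n} be an ε-subspace embedding for the column space of M. Then for every i ∈ {1,…,d}, (1−ε)·σ_i(M)² ≤ σ_i(ΠM)² ≤ (1+ε)·σ_i(M)², where σ_i denotes the i-th largest singular value. -/
open Matrix

noncomputable section

/-- Squared Euclidean norm of a vector. -/
def sqNorm {ι : Type*} [Fintype ι] (v : ι → ℝ) : ℝ := ∑ i, (v i) ^ 2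

/-- `P` is an `ε`-subspace embedding for the column space of `A`:
for all `x`, `(1-ε)‖Ax‖² ≤ ‖PAx‖² ≤ (1+ε)‖Ax‖²`. -/
def IsSubspaceEmbedding {K N C : Type*} [Fintype K] [Fintype N] [Fintype C]
    (P : Matrix K N ℝ) (A : Matrix N C ℝ) (ε : ℝ) : Prop :=
  ∀ x : C → ℝ,
    (1 - ε) * sqNorm (A.mulVec x) ≤ sqNorm ((P * A).mulVec x) ∧
      sqNorm ((P * A).mulVec x) ≤ (1 + ε) * sqNorm (A.mulVec x)

/-- The square of the `i`-th largest singular value of `M`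
(`i = 0` is the largest), characterized by the Courant–Fischer min-max theorem:
`σ_i(M)² = min_{S ∈ ℝ^{i×d}} max_{Sx = 0, ‖x‖ = 1} ‖Mx‖²`. -/
def svalSq {n d : ℕ} (M : Matrix (Fin n) (Fin d) ℝ) (i : Fin d) : ℝ :=
  ⨅ S : Matrix (Fin (i : ℕ)) (Fin d) ℝ,
    sSup {r : ℝ | ∃ x : Fin d → ℝ, S.mulVec x = 0 ∧ sqNorm x = 1 ∧ r = sqNorm (M.mulVec x)}

namespace SVAux

lemma sqNorm_nonneg {ι : Type*} [Fintype ι] (v : ι → ℝ) : 0 ≤ sqNorm v :=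
  Finset.sum_nonneg fun _ _ => sq_nonneg _

lemma sqNorm_smul {ι : Type*} [Fintype ι] (c : ℝ) (v : ι → ℝ) :
    sqNorm (c • v) = c ^ 2 * sqNorm v := by
  simp [sqNorm, Finset.mul_sum, mul_pow]

/-- The constraint set is nonempty: a matrix with fewer rows than columns has
nontrivial kernel. -/
lemma set_nonempty {n d : ℕ} (M : Matrix (Fin n) (Fin d) ℝ) {m : ℕ} (hm : m < d)
    (S : Matrix (Fin m) (Fin d) ℝ) :
    {r : ℝ | ∃ x : Fin d → ℝ, S.mulVec x = 0 ∧ sqNorm x = 1 ∧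
      r = sqNorm (M.mulVec x)}.Nonempty := by
  -- find a nonzero x in ker S
  obtain ⟨x, hxker, hx0⟩ : ∃ x : Fin d → ℝ, S.mulVec x = 0 ∧ x ≠ 0 := by
    by_contra h
    push_neg at h
    have hinj : Function.Injective S.mulVecLin := by
      rw [← LinearMap.ker_eq_bot, LinearMap.ker_eq_bot']
      intro y hy
      by_contra hy0
      exact hy0 (h y hy)
    have := LinearMap.finrank_le_finrank_of_injective hinj
    simp only [Module.finrank_fin_fun] at this
    omega
  have hpos : 0 < sqNorm x := by
    rcases Function.ne_iff.mp hx0 with ⟨j, hj⟩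
    have : (x j) ^ 2 ≤ sqNorm x :=
      Finset.single_le_sum (fun i _ => sq_nonneg (x i)) (Finset.mem_univ j)
    have h2 : 0 < (x j) ^ 2 := pow_two_pos_of_ne_zero hj
    linarith
  set c : ℝ := Real.sqrt (sqNorm x) with hc
  have hcpos : 0 < c := Real.sqrt_pos.mpr hpos
  refine ⟨sqNorm (M.mulVec (c⁻¹ • x)), c⁻¹ • x, ?_, ?_, rfl⟩
  · rw [Matrix.mulVec_smul, hxker, smul_zero]
  · rw [sqNorm_smul, hc, inv_pow, Real.sq_sqrt hpos.le]
    exact inv_mul_cancel₀ hpos.ne'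

lemma mem_le_bound {n d : ℕ} (M : Matrix (Fin n) (Fin d) ℝ) {x : Fin d → ℝ}
    (hx : sqNorm x = 1) : sqNorm (M.mulVec x) ≤ ∑ i, ∑ j, (M i j) ^ 2 := by
  unfold sqNorm at *
  refine Finset.sum_le_sum fun i _ => ?_
  have := Finset.sum_mul_sq_le_sq_mul_sq Finset.univ (fun j => M i j) x
  calc (M.mulVec x i) ^ 2 = (∑ j, M i j * x j) ^ 2 := by
        simp [Matrix.mulVec, dotProduct]
    _ ≤ (∑ j, (M i j) ^ 2) * ∑ j, (x j) ^ 2 := this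
    _ = ∑ j, (M i j) ^ 2 := by rw [hx, mul_one]

lemma set_bddAbove {n d : ℕ} (M : Matrix (Fin n) (Fin d) ℝ) {m : ℕ}
    (S : Matrix (Fin m) (Fin d) ℝ) :
    BddAbove {r : ℝ | ∃ x : Fin d → ℝ, S.mulVec x = 0 ∧ sqNorm x = 1 ∧
      r = sqNorm (M.mulVec x)} := by
  refine ⟨∑ i, ∑ j, (M i j) ^ 2, fun r hr => ?_⟩
  obtain ⟨x, _, hx1, rfl⟩ := hr
  exact mem_le_bound M hx1

lemma sSup_nonneg {n d : ℕ} (M : Matrix (Fin n) (Fin d) ℝ) {m : ℕ} (hm : m < d)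
    (S : Matrix (Fin m) (Fin d) ℝ) :
    0 ≤ sSup {r : ℝ | ∃ x : Fin d → ℝ, S.mulVec x = 0 ∧ sqNorm x = 1 ∧
      r = sqNorm (M.mulVec x)} := by
  obtain ⟨r, hr⟩ := set_nonempty M hm S
  have h0 : 0 ≤ r := by obtain ⟨x, _, _, rfl⟩ := hr; exact sqNorm_nonneg _
  exact h0.trans (le_csSup (set_bddAbove M S) hr)

end SVAux

open SVAux in
/-- An `ε`-subspace embedding preserves all squared singular values up to `(1 ± ε)`. -/
theorem singular_values_preserved {n d k : ℕ} {ε : ℝ} (hε : 0 < ε) (hε' : ε ≤ 1 / 2)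
    (M : Matrix (Fin n) (Fin d) ℝ) (P : Matrix (Fin k) (Fin n) ℝ)
    (hP : IsSubspaceEmbedding P M ε) (i : Fin d) :
    (1 - ε) * svalSq M i ≤ svalSq (P * M) i ∧
      svalSq (P * M) i ≤ (1 + ε) * svalSq M i := by
  have hi : (i : ℕ) < d := i.isLt
  have h1ε : (0:ℝ) < 1 - ε := by linarith
  set g : Matrix (Fin (i : ℕ)) (Fin d) ℝ → ℝ := fun S =>
    sSup {r : ℝ | ∃ x : Fin d → ℝ, S.mulVec x = 0 ∧ sqNorm x = 1 ∧
      r = sqNorm (M.mulVec x)} with hg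
  set f : Matrix (Fin (i : ℕ)) (Fin d) ℝ → ℝ := fun S =>
    sSup {r : ℝ | ∃ x : Fin d → ℝ, S.mulVec x = 0 ∧ sqNorm x = 1 ∧
      r = sqNorm ((P * M).mulVec x)} with hf
  have hfS_nonneg : ∀ S, 0 ≤ f S := fun S => sSup_nonneg (P * M) hi S
  have hgS_nonneg : ∀ S, 0 ≤ g S := fun S => sSup_nonneg M hi S
  -- pointwise comparison for each S
  have hkey : ∀ S, (1 - ε) * g S ≤ f S ∧ f S ≤ (1 + ε) * g S := by
    intro S
    constructor
    · -- (1-ε) * g S ≤ f S : show g S ≤ f S / (1-ε)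
      have : g S ≤ f S / (1 - ε) := by
        refine csSup_le (set_nonempty M hi S) fun r hr => ?_
        obtain ⟨x, hxk, hx1, rfl⟩ := hr
        have hmem : sqNorm ((P * M).mulVec x) ∈
            {r : ℝ | ∃ x : Fin d → ℝ, S.mulVec x = 0 ∧ sqNorm x = 1 ∧
              r = sqNorm ((P * M).mulVec x)} := ⟨x, hxk, hx1, rfl⟩
        have h1 : (1 - ε) * sqNorm (M.mulVec x) ≤ f S :=
          (hP x).1.trans (le_csSup (set_bddAbove (P * M) S) hmem)
        rw [le_div_iff₀ h1ε]
        linarith [h1]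
      calc (1 - ε) * g S ≤ (1 - ε) * (f S / (1 - ε)) := by
            exact mul_le_mul_of_nonneg_left this h1ε.le
        _ = f S := by field_simp
    · refine csSup_le (set_nonempty (P * M) hi S) fun r hr => ?_
      obtain ⟨x, hxk, hx1, rfl⟩ := hr
      have hmem : sqNorm (M.mulVec x) ∈
          {r : ℝ | ∃ x : Fin d → ℝ, S.mulVec x = 0 ∧ sqNorm x = 1 ∧
            r = sqNorm (M.mulVec x)} := ⟨x, hxk, hx1, rfl⟩
      have h2 : sqNorm (M.mulVec x) ≤ g S := le_csSup (set_bddAbove M S) hmem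
      have := (hP x).2
      nlinarith [hε]
  have hbddf : BddBelow (Set.range f) := ⟨0, fun r ⟨S, hS⟩ => hS ▸ hfS_nonneg S⟩
  have hbddg : BddBelow (Set.range fun S => (1 + ε) * g S) :=
    ⟨0, fun r ⟨S, hS⟩ => hS ▸ mul_nonneg (by linarith) (hgS_nonneg S)⟩
  have hbddg' : BddBelow (Set.range fun S => (1 - ε) * g S) :=
    ⟨0, fun r ⟨S, hS⟩ => hS ▸ mul_nonneg h1ε.le (hgS_nonneg S)⟩
  constructor
  · show (1 - ε) * (⨅ S, g S) ≤ ⨅ S, f S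
    rw [Real.mul_iInf_of_nonneg h1ε.le]
    exact ciInf_mono hbddg' fun S => (hkey S).1
  · show (⨅ S, f S) ≤ (1 + ε) * ⨅ S, g S
    rw [Real.mul_iInf_of_nonneg (by linarith : (0:ℝ) ≤ 1 + ε)]
    exact ciInf_mono hbddf fun S => (hkey S).2
end
end

section
/- Let 0 < ε ≤ 1/2, let M ∈ ℝ^{n×d} have full column rank d, and let Π ∈ ℝ^{k×n} be an ε-subspace embedding for the column space of M. Then for every i ∈ {1,…,d}, (1−2ε)·σ_i(M)^{−2} ≤ σ_i(ΠM)^{−2} ≤ (1+2ε)·σ_i(M)^{−2}, where σ_i denotes the i-th largest singular value. -/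
open Matrix

noncomputable section

lemma sqNorm_nonneg {ι : Type*} [Fintype ι] (v : ι → ℝ) : 0 ≤ sqNorm v :=
  Finset.sum_nonneg fun i _ => sq_nonneg _

lemma sqNorm_pos {ι : Type*} [Fintype ι] {v : ι → ℝ} (h : v ≠ 0) : 0 < sqNorm v := by
  obtain ⟨j, hj⟩ := Function.ne_iff.mp h
  exact Finset.sum_pos' (fun i _ => sq_nonneg _)
    ⟨j, Finset.mem_univ j, pow_two_pos_of_ne_zero hj⟩

lemma sqNorm_smul {ι : Type*} [Fintype ι] (c : ℝ) (v : ι → ℝ) :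
    sqNorm (c • v) = c ^ 2 * sqNorm v := by
  simp [sqNorm, Finset.mul_sum, mul_pow]

lemma continuous_sqNorm {ι : Type*} [Fintype ι] : Continuous fun v : ι → ℝ => sqNorm v :=
  continuous_finset_sum _ fun i _ => (continuous_apply i).pow 2

lemma continuous_mulVec {m d : ℕ} (M : Matrix (Fin m) (Fin d) ℝ) :
    Continuous fun x : Fin d → ℝ => M.mulVec x := by
  apply continuous_pi
  intro j
  simp only [Matrix.mulVec, dotProduct]
  exact continuous_finset_sum _ fun l _ => (continuous_const.mul (continuous_apply l))

lemma sphere_compact (d : ℕ) : IsCompact {x : Fin d → ℝ | sqNorm x = 1} := by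
  apply Metric.isCompact_of_isClosed_isBounded
  · exact isClosed_eq continuous_sqNorm continuous_const
  · apply (Metric.isBounded_closedBall (x := (0 : Fin d → ℝ)) (r := 1)).subset
    intro x hx
    simp only [Metric.mem_closedBall, dist_zero_right]
    refine pi_norm_le_iff_of_nonneg zero_le_one |>.mpr fun j => ?_
    have h1 : (x j) ^ 2 ≤ sqNorm x :=
      Finset.single_le_sum (fun l _ => sq_nonneg (x l)) (Finset.mem_univ j)
    have hx1 : sqNorm x = 1 := hx
    rw [Real.norm_eq_abs, abs_le]
    constructor <;> nlinarith

/-- there is a unit vector in the kernel of any `i × d` matrix with `i < d`. -/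
lemma exists_unit_ker {d : ℕ} (i : Fin d) (S : Matrix (Fin (i:ℕ)) (Fin d) ℝ) :
    ∃ x : Fin d → ℝ, S.mulVec x = 0 ∧ sqNorm x = 1 := by
  -- kernel is nontrivial
  have hne : ∃ y : Fin d → ℝ, y ≠ 0 ∧ S.mulVec y = 0 := by
    by_contra h
    push_neg at h
    have hinj : Function.Injective S.mulVecLin := by
      rw [← LinearMap.ker_eq_bot, eq_bot_iff]
      intro y hy
      simp only [LinearMap.mem_ker, Matrix.mulVecLin_apply] at hy
      by_contra hy0
      exact absurd hy (h y (by simpa using hy0))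
    have hfr := LinearMap.finrank_le_finrank_of_injective hinj
    simp only [Module.finrank_pi, Fintype.card_fin] at hfr
    have := i.isLt
    omega
  obtain ⟨y, hy0, hyk⟩ := hne
  have hpos : 0 < sqNorm y := sqNorm_pos hy0
  refine ⟨(Real.sqrt (sqNorm y))⁻¹ • y, ?_, ?_⟩
  · rw [Matrix.mulVec_smul, hyk, smul_zero]
  · rw [sqNorm_smul, inv_pow, Real.sq_sqrt hpos.le]
    field_simp

/-- For a full column rank matrix, an `ε`-subspace embedding preserves the inverse
squared singular values up to `(1 ± 2ε)`. -/
theorem inverse_singular_values_preserved {n d k : ℕ} {ε : ℝ} (hε : 0 < ε) (hε' : ε ≤ 1 / 2)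
    (M : Matrix (Fin n) (Fin d) ℝ) (hrank : M.rank = d) (P : Matrix (Fin k) (Fin n) ℝ)
    (hP : IsSubspaceEmbedding P M ε) (i : Fin d) :
    (1 - 2 * ε) * (svalSq M i)⁻¹ ≤ (svalSq (P * M) i)⁻¹ ∧
      (svalSq (P * M) i)⁻¹ ≤ (1 + 2 * ε) * (svalSq M i)⁻¹ := by
  classical
  -- injectivity of M
  have hinj : Function.Injective M.mulVecLin := by
    rw [← LinearMap.ker_eq_bot]
    have hrn := M.mulVecLin.finrank_range_add_finrank_ker
    rw [show Module.finrank ℝ (LinearMap.range M.mulVecLin) = d from hrank] at hrn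
    simp only [Module.finrank_pi, Fintype.card_fin] at hrn
    have : Module.finrank ℝ (LinearMap.ker M.mulVecLin) = 0 := by omega
    exact Submodule.finrank_eq_zero.mp this
  -- minimum and maximum of ‖Mx‖² over the unit sphere
  have hcont : Continuous fun x : Fin d → ℝ => sqNorm (M.mulVec x) :=
    continuous_sqNorm.comp (continuous_mulVec M)
  have hsph_ne : {x : Fin d → ℝ | sqNorm x = 1}.Nonempty := by
    refine ⟨Pi.single i 1, ?_⟩
    show sqNorm _ = 1
    unfold sqNorm
    rw [Finset.sum_eq_single i (fun b _ hb => by simp [Pi.single_apply, hb])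
      (fun h => absurd (Finset.mem_univ i) h)]
    simp
  obtain ⟨xm, hxm, hxm_min⟩ :=
    (sphere_compact d).exists_isMinOn hsph_ne hcont.continuousOn
  obtain ⟨xM, hxM, hxM_max⟩ :=
    (sphere_compact d).exists_isMaxOn hsph_ne hcont.continuousOn
  set c : ℝ := sqNorm (M.mulVec xm) with hc
  set B : ℝ := sqNorm (M.mulVec xM) with hB
  have hcpos : 0 < c := by
    apply sqNorm_pos
    intro h0
    have : xm = 0 := hinj (by simpa [Matrix.mulVecLin_apply] using h0)
    rw [this] at hxm
    simp [Set.mem_setOf_eq, sqNorm] at hxm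
  -- the sets
  set T : Matrix (Fin (i:ℕ)) (Fin d) ℝ → Set ℝ := fun S =>
    {r : ℝ | ∃ x : Fin d → ℝ, S.mulVec x = 0 ∧ sqNorm x = 1 ∧ r = sqNorm (M.mulVec x)} with hT
  set T' : Matrix (Fin (i:ℕ)) (Fin d) ℝ → Set ℝ := fun S =>
    {r : ℝ | ∃ x : Fin d → ℝ, S.mulVec x = 0 ∧ sqNorm x = 1 ∧ r = sqNorm ((P * M).mulVec x)}
    with hT'
  have hTne : ∀ S, (T S).Nonempty := by
    intro S
    obtain ⟨x, hx1, hx2⟩ := exists_unit_ker i S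
    exact ⟨_, x, hx1, hx2, rfl⟩
  have hT'ne : ∀ S, (T' S).Nonempty := by
    intro S
    obtain ⟨x, hx1, hx2⟩ := exists_unit_ker i S
    exact ⟨_, x, hx1, hx2, rfl⟩
  have hTbdd : ∀ S, BddAbove (T S) := by
    intro S
    refine ⟨B, fun r hr => ?_⟩
    obtain ⟨x, _, hx2, rfl⟩ := hr
    exact hxM_max hx2
  have hT'bdd : ∀ S, BddAbove (T' S) := by
    intro S
    refine ⟨(1 + ε) * B, fun r hr => ?_⟩
    obtain ⟨x, _, hx2, rfl⟩ := hr
    have h2 := (hP x).2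
    have h3 : sqNorm (M.mulVec x) ≤ B := hxM_max hx2
    nlinarith [sqNorm_nonneg (M.mulVec x)]
  -- lower bound c for sSup (T S), via any element
  have hT_lb : ∀ S, c ≤ sSup (T S) := by
    intro S
    obtain ⟨x, hx1, hx2⟩ := exists_unit_ker i S
    calc c ≤ sqNorm (M.mulVec x) := hxm_min hx2
    _ ≤ sSup (T S) := le_csSup (hTbdd S) ⟨x, hx1, hx2, rfl⟩
  have hT'_lb : ∀ S, (1 - ε) * c ≤ sSup (T' S) := by
    intro S
    obtain ⟨x, hx1, hx2⟩ := exists_unit_ker i S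
    have h1 := (hP x).1
    have h2 : c ≤ sqNorm (M.mulVec x) := hxm_min hx2
    calc (1 - ε) * c ≤ (1 - ε) * sqNorm (M.mulVec x) := by nlinarith
    _ ≤ sqNorm ((P * M).mulVec x) := h1
    _ ≤ sSup (T' S) := le_csSup (hT'bdd S) ⟨x, hx1, hx2, rfl⟩
  -- pointwise comparison of the sups
  have hsup_le : ∀ S, sSup (T' S) ≤ (1 + ε) * sSup (T S) := by
    intro S
    apply csSup_le (hT'ne S)
    rintro r ⟨x, hx1, hx2, rfl⟩
    have h2 := (hP x).2
    have h3 : sqNorm (M.mulVec x) ≤ sSup (T S) := le_csSup (hTbdd S) ⟨x, hx1, hx2, rfl⟩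
    nlinarith
  have hsup_ge : ∀ S, (1 - ε) * sSup (T S) ≤ sSup (T' S) := by
    intro S
    have h1ε : (0:ℝ) < 1 - ε := by linarith
    rw [← le_div_iff₀' h1ε]
    apply csSup_le (hTne S)
    rintro r ⟨x, hx1, hx2, rfl⟩
    rw [le_div_iff₀' h1ε]
    calc (1 - ε) * sqNorm (M.mulVec x) ≤ sqNorm ((P * M).mulVec x) := (hP x).1
    _ ≤ sSup (T' S) := le_csSup (hT'bdd S) ⟨x, hx1, hx2, rfl⟩
  -- properties of the infima
  have hbddT : BddBelow (Set.range fun S => sSup (T S)) :=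
    ⟨c, by rintro r ⟨S, rfl⟩; exact hT_lb S⟩
  have hbddT' : BddBelow (Set.range fun S => sSup (T' S)) :=
    ⟨(1 - ε) * c, by rintro r ⟨S, rfl⟩; exact hT'_lb S⟩
  have hM_eq : svalSq M i = ⨅ S, sSup (T S) := rfl
  have hPM_eq : svalSq (P * M) i = ⨅ S, sSup (T' S) := rfl
  have hMpos : c ≤ svalSq M i := by
    rw [hM_eq]; exact le_ciInf hT_lb
  have hPMpos : (1 - ε) * c ≤ svalSq (P * M) i := by
    rw [hPM_eq]; exact le_ciInf hT'_lb
  have hσM : 0 < svalSq M i := lt_of_lt_of_le hcpos hMpos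
  have h1ε : (0:ℝ) < 1 - ε := by linarith
  have hσPM : 0 < svalSq (P * M) i := lt_of_lt_of_le (by nlinarith) hPMpos
  have hεb : (0:ℝ) < 1 + ε := by linarith
  -- key comparisons of svalSq
  have hbdd2 : BddBelow (Set.range fun S => (1 - ε) * sSup (T S)) := by
    refine ⟨(1 - ε) * c, ?_⟩
    rintro r ⟨S, rfl⟩
    exact mul_le_mul_of_nonneg_left (hT_lb S) h1ε.le
  have key_ge : (1 - ε) * svalSq M i ≤ svalSq (P * M) i := by
    rw [hM_eq, hPM_eq, Real.mul_iInf_of_nonneg h1ε.le]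
    exact ciInf_mono hbdd2 hsup_ge
  have key_le : svalSq (P * M) i ≤ (1 + ε) * svalSq M i := by
    rw [hM_eq, hPM_eq, Real.mul_iInf_of_nonneg hεb.le]
    exact ciInf_mono hbddT' hsup_le
  have hinvM : (0:ℝ) ≤ (svalSq M i)⁻¹ := inv_nonneg.mpr hσM.le
  constructor
  · -- lower bound
    have h1 : 1 / ((1 + ε) * svalSq M i) ≤ 1 / svalSq (P * M) i :=
      one_div_le_one_div_of_le hσPM key_le
    rw [one_div, one_div, mul_inv] at h1
    have h3 : 1 - 2 * ε ≤ (1 + ε)⁻¹ := by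
      rw [inv_eq_one_div, le_div_iff₀ hεb]
      nlinarith
    calc (1 - 2 * ε) * (svalSq M i)⁻¹ ≤ (1 + ε)⁻¹ * (svalSq M i)⁻¹ :=
          mul_le_mul_of_nonneg_right h3 hinvM
    _ ≤ (svalSq (P * M) i)⁻¹ := h1
  · -- upper bound
    have h1 : 1 / svalSq (P * M) i ≤ 1 / ((1 - ε) * svalSq M i) :=
      one_div_le_one_div_of_le (by positivity) key_ge
    rw [one_div, one_div, mul_inv] at h1
    have h3 : (1 - ε)⁻¹ ≤ 1 + 2 * ε := by
      rw [inv_eq_one_div, div_le_iff₀ h1ε]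
      nlinarith
    calc (svalSq (P * M) i)⁻¹ ≤ (1 - ε)⁻¹ * (svalSq M i)⁻¹ := h1
    _ ≤ (1 + 2 * ε) * (svalSq M i)⁻¹ := mul_le_mul_of_nonneg_right h3 hinvM
end
end

section
/- Let 0 < ε ≤ 1/2, let X ∈ ℝ^{n×d}, Y ∈ ℝⁿ, and let Π ∈ ℝ^{k×n} be an (ε/3)-subspace embedding for the column space of the augmented matrix [X,Y] ∈ ℝ^{n×(d+1)}. Let γ ∈ ℝᵈ be a minimizer of β ↦ ‖Xβ − Y‖² and let ν ∈ ℝᵈ be a minimizer of β ↦ ‖Π(Xβ − Y)‖². Then ‖Xν − Y‖² ≤ (1+ε)·‖Xγ − Y‖². -/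
open Matrix

noncomputable section

/-- The augmented matrix `[X, Y]` obtained by appending the column `Y` to `X`. -/
def augment {n d : ℕ} (X : Matrix (Fin n) (Fin d) ℝ) (Y : Fin n → ℝ) :
    Matrix (Fin n) (Fin (d + 1)) ℝ :=
  Matrix.of fun i => Fin.snoc (X i) (Y i)


lemma augment_mulVec_snoc {n d : ℕ} (X : Matrix (Fin n) (Fin d) ℝ) (Y : Fin n → ℝ)
    (β : Fin d → ℝ) :
    (augment X Y).mulVec (Fin.snoc β (-1)) = X.mulVec β - Y := by
  funext i
  simp [augment, Matrix.mulVec, dotProduct, Fin.sum_univ_castSucc, Fin.snoc_castSucc]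
  ring

/-- Sketched least squares: if `Π` is an `(ε/3)`-subspace embedding for the column
space of `[X, Y]`, the minimizer `ν` of the sketched problem is a `(1+ε)`-approximate
minimizer of the original least squares problem. -/
theorem sketched_least_squares {n d k : ℕ} {ε : ℝ} (hε : 0 < ε) (hε' : ε ≤ 1 / 2)
    (X : Matrix (Fin n) (Fin d) ℝ) (Y : Fin n → ℝ) (P : Matrix (Fin k) (Fin n) ℝ)
    (hP : IsSubspaceEmbedding P (augment X Y) (ε / 3))
    (γ ν : Fin d → ℝ)
    (hγ : ∀ β : Fin d → ℝ, sqNorm (X.mulVec γ - Y) ≤ sqNorm (X.mulVec β - Y))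
    (hν : ∀ β : Fin d → ℝ,
      sqNorm (P.mulVec (X.mulVec ν - Y)) ≤ sqNorm (P.mulVec (X.mulVec β - Y))) :
    sqNorm (X.mulVec ν - Y) ≤ (1 + ε) * sqNorm (X.mulVec γ - Y) := by
  set e := ε / 3 with he
  have h1 : ∀ β : Fin d → ℝ,
      (1 - e) * sqNorm (X.mulVec β - Y) ≤ sqNorm (P.mulVec (X.mulVec β - Y)) ∧
      sqNorm (P.mulVec (X.mulVec β - Y)) ≤ (1 + e) * sqNorm (X.mulVec β - Y) := by
    intro β
    have := hP (Fin.snoc β (-1))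
    rwa [← Matrix.mulVec_mulVec, augment_mulVec_snoc] at this
  have hpos : (0:ℝ) < 1 - e := by
    simp only [he]; linarith
  have A := (h1 ν).1
  have B := hν γ
  have C := (h1 γ).2
  have D : (1 - e) * sqNorm (X.mulVec ν - Y) ≤ (1 + e) * sqNorm (X.mulVec γ - Y) :=
    le_trans A (le_trans B C)
  have key : (1 + e) ≤ (1 + ε) * (1 - e) := by
    simp only [he]; nlinarith
  have hg := sqNorm_nonneg (X.mulVec γ - Y)
  calc sqNorm (X.mulVec ν - Y)
      ≤ ((1 + e) * sqNorm (X.mulVec γ - Y)) / (1 - e) := by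
        rw [le_div_iff₀ hpos]; linarith [D]
    _ ≤ (1 + ε) * sqNorm (X.mulVec γ - Y) := by
        rw [div_le_iff₀ hpos]; nlinarith
end
end

section
/- Let 0 < ε ≤ 1/2, let X ∈ ℝ^{n×d} have full column rank d, and let Π ∈ ℝ^{k×n} be an (ε/3)-subspace embedding for the column space of X. Then trace((XᵀΠᵀΠX)⁻¹) ≤ (1+ε) · trace((XᵀX)⁻¹). -/
/-!
The embedding property says that `XᵀΠᵀΠX` dominates `(1 - ε/3) • XᵀX` in the Loewner order.
Inversion is antitone on positive definite matrices, because the quadratic form of `M⁻¹` is the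
convex conjugate `x ↦ sup_y (2 ⟪x, y⟫ - ⟪y, M y⟫)` of that of `M`. Hence
`(XᵀΠᵀΠX)⁻¹ ≤ (1 - ε/3)⁻¹ • (XᵀX)⁻¹`, and taking traces concludes, as `(1 - ε/3)⁻¹ ≤ 1 + ε`
for `0 ≤ ε ≤ 2`.
-/

open Matrix

noncomputable section

open scoped MatrixOrder

lemma Matrix.mulVec_injective_of_rank_eq_card {K m n : Type*} [Field K] [Fintype m] [Fintype n]
    {A : Matrix m n K} (hA : A.rank = Fintype.card n) : Function.Injective A.mulVec := by
  have hker : Module.finrank K (LinearMap.ker A.mulVecLin) = 0 := by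
    have := LinearMap.finrank_range_add_finrank_ker A.mulVecLin
    rw [Module.finrank_fintype_fun_eq_card] at this
    change A.rank + _ = _ at this
    omega
  rw [← coe_mulVecLin, ← LinearMap.ker_eq_bot]
  exact Submodule.finrank_eq_zero.mp hker

lemma Matrix.isHermitian_transpose_mul_self {m n : Type*} [Fintype m] (A : Matrix m n ℝ) :
    (Aᵀ * A).IsHermitian := by
  simpa using isHermitian_conjTranspose_mul_self A

lemma Matrix.dotProduct_transpose_mul_self_mulVec {m n : Type*} [Fintype m] [Fintype n]
    (A : Matrix m n ℝ) (x : n → ℝ) : x ⬝ᵥ (Aᵀ * A) *ᵥ x = sqNorm (A *ᵥ x) := by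
  rw [← mulVec_mulVec, dotProduct_mulVec, vecMul_transpose, sqNorm]
  simp [dotProduct, sq]

lemma IsSubspaceEmbedding.smul_transpose_mul_self_le {K N C : Type*} [Fintype K] [Fintype N]
    [Fintype C] {P : Matrix K N ℝ} {A : Matrix N C ℝ} {ε : ℝ} (hP : IsSubspaceEmbedding P A ε) :
    (1 - ε) • (Aᵀ * A) ≤ (P * A)ᵀ * (P * A) := by
  rw [le_iff]
  refine .of_dotProduct_mulVec_nonneg ?_ fun x => ?_
  · exact (isHermitian_transpose_mul_self _).sub
      ((isHermitian_transpose_mul_self _).smul (.all _))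
  · rw [star_trivial, sub_mulVec, dotProduct_sub, smul_mulVec, dotProduct_smul, smul_eq_mul,
      dotProduct_transpose_mul_self_mulVec, dotProduct_transpose_mul_self_mulVec, sub_nonneg]
    exact (hP x).1

lemma Matrix.trace_mono {ι : Type*} [Fintype ι] {A B : Matrix ι ι ℝ} (h : A ≤ B) :
    A.trace ≤ B.trace := by
  simpa [trace_sub] using (le_iff.mp h).trace_nonneg

section LoewnerOrder

variable {ι : Type*} [Fintype ι] [DecidableEq ι]

lemma Matrix.PosDef.two_mul_dotProduct_sub_le_dotProduct_inv_mulVec {M : Matrix ι ι ℝ}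
    (hM : M.PosDef) (x y : ι → ℝ) : 2 * (x ⬝ᵥ y) - y ⬝ᵥ M *ᵥ y ≤ x ⬝ᵥ M⁻¹ *ᵥ x := by
  set z := M⁻¹ *ᵥ x
  have hMz : M *ᵥ z = x := by
    rw [mulVec_mulVec, mul_nonsing_inv _ hM.det_pos.ne'.isUnit, one_mulVec]
  have hzMy : z ⬝ᵥ M *ᵥ y = x ⬝ᵥ y := by
    rw [dotProduct_mulVec, ← mulVec_transpose, ← conjTranspose_eq_transpose_of_trivial,
      hM.isHermitian.eq, hMz]
  have := hM.posSemidef.dotProduct_mulVec_nonneg (z - y)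
  rw [star_trivial, mulVec_sub, hMz, dotProduct_sub, sub_dotProduct, sub_dotProduct, hzMy,
    dotProduct_comm z x, dotProduct_comm y x] at this
  linarith

lemma Matrix.PosDef.inv_anti {M N : Matrix ι ι ℝ} (hM : M.PosDef) (hMN : M ≤ N) :
    N⁻¹ ≤ M⁻¹ := by
  have hN : N.PosDef := by simpa using hM.add_posSemidef hMN
  refine .of_dotProduct_mulVec_nonneg (hM.inv.isHermitian.sub hN.inv.isHermitian) fun x => ?_
  rw [star_trivial, sub_mulVec, dotProduct_sub, sub_nonneg]
  set y := N⁻¹ *ᵥ x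
  have hNy : N *ᵥ y = x := by
    rw [mulVec_mulVec, mul_nonsing_inv _ hN.det_pos.ne'.isUnit, one_mulVec]
  have hquad : y ⬝ᵥ M *ᵥ y ≤ y ⬝ᵥ N *ᵥ y := by
    have := (le_iff.mp hMN).dotProduct_mulVec_nonneg y
    rwa [star_trivial, sub_mulVec, dotProduct_sub, sub_nonneg] at this
  calc x ⬝ᵥ N⁻¹ *ᵥ x = 2 * (x ⬝ᵥ y) - y ⬝ᵥ N *ᵥ y := by rw [hNy, dotProduct_comm y]; ring
    _ ≤ 2 * (x ⬝ᵥ y) - y ⬝ᵥ M *ᵥ y := by linarith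
    _ ≤ x ⬝ᵥ M⁻¹ *ᵥ x := hM.two_mul_dotProduct_sub_le_dotProduct_inv_mulVec x y

lemma Matrix.PosDef.trace_inv_le_of_smul_le {M N : Matrix ι ι ℝ} {c : ℝ} (hM : M.PosDef)
    (hc : 0 < c) (h : c • M ≤ N) : N⁻¹.trace ≤ c⁻¹ * M⁻¹.trace := by
  have hinv : (c • M)⁻¹ = c⁻¹ • M⁻¹ := inv_eq_left_inv <| by
    rw [smul_mul_smul_comm, inv_mul_cancel₀ hc.ne', nonsing_inv_mul _ hM.det_pos.ne'.isUnit,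
      one_smul]
  calc N⁻¹.trace ≤ (c • M)⁻¹.trace := trace_mono ((hM.smul hc).inv_anti h)
    _ = c⁻¹ * M⁻¹.trace := by rw [hinv, trace_smul, smul_eq_mul]

end LoewnerOrder

/-- If `Π` is an `(ε/3)`-subspace embedding for the column space of the full column
rank matrix `X`, then `trace((XᵀΠᵀΠX)⁻¹) ≤ (1+ε)·trace((XᵀX)⁻¹)`. -/
theorem trace_inverse_bound {n d k : ℕ} {ε : ℝ} (hε : 0 < ε) (hε' : ε ≤ 1 / 2)
    (X : Matrix (Fin n) (Fin d) ℝ) (hrank : X.rank = d)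
    (P : Matrix (Fin k) (Fin n) ℝ) (hP : IsSubspaceEmbedding P X (ε / 3)) :
    ((Xᵀ * Pᵀ * P * X)⁻¹).trace ≤ (1 + ε) * ((Xᵀ * X)⁻¹).trace := by
  have hX : (Xᵀ * X).PosDef := by
    simpa using PosDef.conjTranspose_mul_self X (mulVec_injective_of_rank_eq_card (by simpa))
  have hc : 0 < 1 - ε / 3 := by linarith
  have hle : (1 - ε / 3) • (Xᵀ * X) ≤ Xᵀ * Pᵀ * P * X := by
    simpa [transpose_mul, Matrix.mul_assoc] using hP.smul_transpose_mul_self_le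
  have hc_inv : (1 - ε / 3)⁻¹ ≤ 1 + ε := by
    rw [inv_le_iff_one_le_mul₀ hc]
    nlinarith
  calc ((Xᵀ * Pᵀ * P * X)⁻¹).trace ≤ (1 - ε / 3)⁻¹ * ((Xᵀ * X)⁻¹).trace :=
        hX.trace_inv_le_of_smul_le hc hle
    _ ≤ (1 + ε) * ((Xᵀ * X)⁻¹).trace :=
        mul_le_mul_of_nonneg_right hc_inv hX.inv.posSemidef.trace_nonneg
end
end

section
/- Let 0 < ε ≤ 1/2, let X ∈ ℝ^{n×d} have full column rank d, let Y ∈ ℝⁿ, and let Π ∈ ℝ^{k×n} be an (ε/3)-subspace embedding for the column space of the augmented matrix [X,Y]. Let γ be a minimizer of β ↦ ‖Xβ − Y‖² and ν a minimizer of β ↦ ‖Π(Xβ − Y)‖². Suppose ‖Xγ‖ ≥ ρ‖Y‖ for some ρ ∈ (0,1]. Then ‖ν‖ ≤ (1 + (κ(X)/ρ)·ε)·‖γ‖, where κ(X) = σ_max(X)/σ_min(X) is the condition number of X. -/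
open Matrix

noncomputable section

/-- Euclidean norm of a vector. -/
def eNorm {ι : Type*} [Fintype ι] (v : ι → ℝ) : ℝ := Real.sqrt (sqNorm v)

/-- The squared smallest singular value of `M`: `σ_min(M)² = inf_{‖x‖ = 1} ‖Mx‖²`. -/
def sigMinSq {N C : Type*} [Fintype N] [Fintype C] (M : Matrix N C ℝ) : ℝ :=
  sInf {r : ℝ | ∃ x : C → ℝ, sqNorm x = 1 ∧ r = sqNorm (M.mulVec x)}

/-- The squared largest singular value of `M`: `σ_max(M)² = sup_{‖x‖ = 1} ‖Mx‖²`. -/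
def sigMaxSq {N C : Type*} [Fintype N] [Fintype C] (M : Matrix N C ℝ) : ℝ :=
  sSup {r : ℝ | ∃ x : C → ℝ, sqNorm x = 1 ∧ r = sqNorm (M.mulVec x)}

/-- The condition number `κ(M) = σ_max(M) / σ_min(M)`. -/
def condNum {N C : Type*} [Fintype N] [Fintype C] (M : Matrix N C ℝ) : ℝ :=
  Real.sqrt (sigMaxSq M) / Real.sqrt (sigMinSq M)

/-!
Write `r = Xγ - Y` and `z = X(ν - γ)`. The normal equations of the two least-squares problems
give `z ⊥ r` and `⟪Πz, Πr⟫ = -‖Πz‖²`. Both vectors lie in the column space of `[X, Y]`, on which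
`Π` nearly preserves norms, so by polarization it nearly preserves the orthogonality of `z` and
`r`; played against `‖Πz‖² ≥ (1 - ε/3) ‖z‖²` this gives `‖z‖ ≤ ε ‖r‖`. Since `γ` beats `β = 0`,
`ρ ‖r‖ ≤ ρ ‖Y‖ ≤ ‖Xγ‖ ≤ σ_max ‖γ‖`, while `σ_min ‖ν - γ‖ ≤ ‖z‖`; hence
`‖ν - γ‖ ≤ (κ(X)/ρ) ε ‖γ‖`, and the triangle inequality concludes.
-/

open scoped RealInnerProductSpace

section InnerProductSpace

variable {E F G : Type*} [NormedAddCommGroup E] [InnerProductSpace ℝ E]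
  [NormedAddCommGroup F] [InnerProductSpace ℝ F] [NormedAddCommGroup G] [InnerProductSpace ℝ G]

theorem inner_eq_zero_of_forall_norm_le_norm_add_smul {r w : E}
    (h : ∀ t : ℝ, ‖r‖ ≤ ‖r + t • w‖) : ⟪r, w⟫ = 0 := by
  have hmin : IsLocalMin (fun t : ℝ => ‖r + t • w‖ ^ 2) 0 :=
    Filter.Eventually.of_forall fun t => by simpa using pow_le_pow_left₀ (norm_nonneg r) (h t) 2
  have hderiv : HasDerivAt (fun t : ℝ => ‖r + t • w‖ ^ 2) (2 * ⟪r, w⟫) 0 := by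
    simpa using (((hasDerivAt_id (0 : ℝ)).smul_const w).const_add r).norm_sq
  linarith [hmin.hasDerivAt_eq_zero hderiv]

theorem inner_apply_sub_eq_zero_of_forall_norm_apply_sub_le (L : E →ₗ[ℝ] F) {y : F} {g : E}
    (hg : ∀ b, ‖L g - y‖ ≤ ‖L b - y‖) (w : E) : ⟪L g - y, L w⟫ = 0 :=
  inner_eq_zero_of_forall_norm_le_norm_add_smul fun t => by
    simpa [add_sub_right_comm] using hg (g + t • w)

def IsSubspaceEmbeddingOn (P : E →ₗ[ℝ] F) (V : Submodule ℝ E) (δ : ℝ) : Prop :=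
  ∀ u ∈ V, (1 - δ) * ‖u‖ ^ 2 ≤ ‖P u‖ ^ 2 ∧ ‖P u‖ ^ 2 ≤ (1 + δ) * ‖u‖ ^ 2

namespace IsSubspaceEmbeddingOn

variable {P : E →ₗ[ℝ] F} {V : Submodule ℝ E} {δ : ℝ}

theorem two_mul_abs_inner_le (hP : IsSubspaceEmbeddingOn P V δ) {u v : E} (hu : u ∈ V)
    (hv : v ∈ V) (huv : ⟪u, v⟫ = 0) : 2 * |⟪P u, P v⟫| ≤ δ * (‖u‖ ^ 2 + ‖v‖ ^ 2) := by
  -- polarization: `4 ⟪P u, P w⟫ = ‖P (u + w)‖² - ‖P (u - w)‖²` and `‖u ± w‖² = ‖u‖² + ‖w‖²`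
  have hle : ∀ w ∈ V, ⟪u, w⟫ = 0 → 2 * ⟪P u, P w⟫ ≤ δ * (‖u‖ ^ 2 + ‖w‖ ^ 2) := by
    intro w hw huw
    have hadd := (hP (u + w) (V.add_mem hu hw)).2
    have hsub := (hP (u - w) (V.sub_mem hu hw)).1
    rw [map_add, norm_add_sq_real, norm_add_sq_real, huw] at hadd
    rw [map_sub, norm_sub_sq_real, norm_sub_sq_real, huw] at hsub
    nlinarith
  have h₁ := hle v hv huv
  have h₂ := hle (-v) (V.neg_mem hv) (by rw [inner_neg_right, huv, neg_zero])
  rw [map_neg, inner_neg_right, norm_neg] at h₂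
  cases abs_cases ⟪P u, P v⟫ <;> linarith

theorem one_sub_mul_norm_le (hP : IsSubspaceEmbeddingOn P V δ) (hδ₀ : 0 < δ) (hδ₁ : δ ≤ 1)
    {z r : E} (hz : z ∈ V) (hr : r ∈ V) (hzr : ⟪z, r⟫ = 0) (hPz : ⟪P z, P (z + r)⟫ = 0) :
    (1 - δ) * ‖z‖ ≤ δ * ‖r‖ := by
  have hPzr : ⟪P z, P r⟫ = -‖P z‖ ^ 2 := by
    rw [map_add, inner_add_right, real_inner_self_eq_norm_sq] at hPz
    linarith
  -- with the weights `1 - δ` and `δ`, this bound and `‖P z‖² ≥ (1 - δ) ‖z‖²` combine to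
  -- `(1 - δ)² ‖z‖² ≤ δ² ‖r‖²`
  have hpol := hP.two_mul_abs_inner_le (V.smul_mem (1 - δ) hz) (V.smul_mem δ hr)
    (by rw [inner_smul_left, inner_smul_right, hzr]; simp)
  rw [map_smul, map_smul, real_inner_smul_left, real_inner_smul_right, hPzr, norm_smul,
    norm_smul, Real.norm_of_nonneg (by linarith), Real.norm_of_nonneg hδ₀.le] at hpol
  have hupper : 2 * (1 - δ) * ‖P z‖ ^ 2 ≤ (1 - δ) ^ 2 * ‖z‖ ^ 2 + δ ^ 2 * ‖r‖ ^ 2 := by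
    nlinarith [neg_le_abs ((1 - δ) * (δ * -‖P z‖ ^ 2))]
  have hlower : 2 * (1 - δ) * ((1 - δ) * ‖z‖ ^ 2) ≤ 2 * (1 - δ) * ‖P z‖ ^ 2 :=
    mul_le_mul_of_nonneg_left (hP z hz).1 (by linarith)
  have hsq : ((1 - δ) * ‖z‖) ^ 2 ≤ (δ * ‖r‖) ^ 2 := by nlinarith
  exact (pow_le_pow_iff_left₀ (by have := norm_nonneg z; nlinarith) (by positivity)
    two_ne_zero).mp hsq

theorem one_sub_mul_norm_apply_sub_le (hP : IsSubspaceEmbeddingOn P V δ) (hδ₀ : 0 < δ)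
    (hδ₁ : δ ≤ 1) (L : G →ₗ[ℝ] E) (hL : LinearMap.range L ≤ V) {y : E} (hy : y ∈ V) {g v : G}
    (hg : ∀ b, ‖L g - y‖ ≤ ‖L b - y‖) (hv : ∀ b, ‖P (L v - y)‖ ≤ ‖P (L b - y)‖) :
    (1 - δ) * ‖L (v - g)‖ ≤ δ * ‖L g - y‖ := by
  have hLV : ∀ b, L b ∈ V := fun b => hL (LinearMap.mem_range_self L b)
  refine hP.one_sub_mul_norm_le hδ₀ hδ₁ (hLV _) (V.sub_mem (hLV g) hy) ?_ ?_
  · rw [real_inner_comm]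
    exact inner_apply_sub_eq_zero_of_forall_norm_apply_sub_le L hg _
  · have hsketch := inner_apply_sub_eq_zero_of_forall_norm_apply_sub_le (P ∘ₗ L) (y := P y)
      (fun b => by simpa using hv b) (v - g)
    rw [show L (v - g) + (L g - y) = L v - y by rw [map_sub]; abel, real_inner_comm]
    simpa using hsketch

theorem mul_norm_sub_le {ε : ℝ} (hP : IsSubspaceEmbeddingOn P V (ε / 3)) (hε₀ : 0 < ε)
    (hε₁ : ε ≤ 2) (L : G →ₗ[ℝ] E) (hL : LinearMap.range L ≤ V) {y : E} (hy : y ∈ V) {g v : G}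
    (hg : ∀ b, ‖L g - y‖ ≤ ‖L b - y‖) (hv : ∀ b, ‖P (L v - y)‖ ≤ ‖P (L b - y)‖)
    {ρ m M : ℝ} (hρ : 0 ≤ ρ) (hLg : ρ * ‖y‖ ≤ ‖L g‖) (hm : ∀ b, m * ‖b‖ ≤ ‖L b‖)
    (hM : ∀ b, ‖L b‖ ≤ M * ‖b‖) :
    ρ * (m * ‖v - g‖) ≤ ε * (M * ‖g‖) := by
  have hres := hP.one_sub_mul_norm_apply_sub_le (by positivity) (by linarith) L hL hy hg hv
  have hresidual : ρ * ‖L g - y‖ ≤ ‖L g‖ :=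
    (mul_le_mul_of_nonneg_left (by simpa using hg 0) hρ).trans hLg
  calc ρ * (m * ‖v - g‖) ≤ ρ * ‖L (v - g)‖ := by gcongr; exact hm _
    _ ≤ ρ * (ε * ‖L g - y‖) := by gcongr; nlinarith [norm_nonneg (L (v - g))]
    _ = ε * (ρ * ‖L g - y‖) := by ring
    _ ≤ ε * (M * ‖g‖) := mul_le_mul_of_nonneg_left (hresidual.trans (hM g)) hε₀.le

end IsSubspaceEmbeddingOn

end InnerProductSpace

theorem LinearMap.norm_apply_eq_norm_mul_norm_apply_inv_norm_smul {E F : Type*}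
    [NormedAddCommGroup E] [NormedSpace ℝ E] [NormedAddCommGroup F] [NormedSpace ℝ F]
    (f : E →ₗ[ℝ] F) {x : E} (hx : x ≠ 0) : ‖f x‖ = ‖x‖ * ‖f (‖x‖⁻¹ • x)‖ := by
  rw [map_smul, norm_smul, norm_inv, norm_norm, mul_inv_cancel_left₀ (norm_ne_zero_iff.mpr hx)]

open WithLp (toLp ofLp)

section EuclideanNorm

variable {ι : Type*} [Fintype ι]

theorem sqNorm_eq_norm_sq (v : ι → ℝ) : sqNorm v = ‖toLp 2 v‖ ^ 2 := by
  simp [sqNorm, EuclideanSpace.real_norm_sq_eq]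

theorem eNorm_eq_norm (v : ι → ℝ) : eNorm v = ‖toLp 2 v‖ := by
  rw [eNorm, sqNorm_eq_norm_sq, Real.sqrt_sq (norm_nonneg _)]

theorem sqNorm_le_sqNorm_iff {u v : ι → ℝ} : sqNorm u ≤ sqNorm v ↔ ‖toLp 2 u‖ ≤ ‖toLp 2 v‖ := by
  rw [sqNorm_eq_norm_sq, sqNorm_eq_norm_sq, sq_le_sq₀ (norm_nonneg _) (norm_nonneg _)]

end EuclideanNorm

theorem condNum_nonneg {N C : Type*} [Fintype N] [Fintype C] (M : Matrix N C ℝ) :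
    0 ≤ condNum M :=
  div_nonneg (Real.sqrt_nonneg _) (Real.sqrt_nonneg _)

section SingularValues

variable {N C : Type*} [Fintype N] [Fintype C] [DecidableEq C] (M : Matrix N C ℝ)

theorem setOf_sqNorm_mulVec_eq_image_sphere :
    {r : ℝ | ∃ x : C → ℝ, sqNorm x = 1 ∧ r = sqNorm (M *ᵥ x)} =
      (fun x => ‖toLpLin 2 2 M x‖ ^ 2) '' Metric.sphere (0 : EuclideanSpace ℝ C) 1 := by
  ext r
  constructor
  · rintro ⟨x, hx, rfl⟩
    rw [sqNorm_eq_norm_sq, pow_eq_one_iff_of_nonneg (norm_nonneg _) two_ne_zero] at hx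
    exact ⟨toLp 2 x, by simpa using hx, by simp [sqNorm_eq_norm_sq]⟩
  · rintro ⟨x, hx, rfl⟩
    exact ⟨ofLp x, by simp [sqNorm_eq_norm_sq, mem_sphere_zero_iff_norm.mp hx],
      by simp [sqNorm_eq_norm_sq, toLpLin_apply]⟩

theorem isCompact_image_sphere :
    IsCompact ((fun x => ‖toLpLin 2 2 M x‖ ^ 2) '' Metric.sphere (0 : EuclideanSpace ℝ C) 1) :=
  (isCompact_sphere 0 1).image ((LinearMap.continuous_of_finiteDimensional _).norm.pow 2)

theorem sigMinSq_le_norm_sq {x : EuclideanSpace ℝ C} (hx : ‖x‖ = 1) :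
    sigMinSq M ≤ ‖toLpLin 2 2 M x‖ ^ 2 := by
  rw [sigMinSq, setOf_sqNorm_mulVec_eq_image_sphere]
  exact csInf_le (isCompact_image_sphere M).bddBelow ⟨x, by simpa using hx, rfl⟩

theorem norm_sq_le_sigMaxSq {x : EuclideanSpace ℝ C} (hx : ‖x‖ = 1) :
    ‖toLpLin 2 2 M x‖ ^ 2 ≤ sigMaxSq M := by
  rw [sigMaxSq, setOf_sqNorm_mulVec_eq_image_sphere]
  exact le_csSup (isCompact_image_sphere M).bddAbove ⟨x, by simpa using hx, rfl⟩

theorem sqrt_sigMinSq_mul_norm_le (x : EuclideanSpace ℝ C) :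
    √(sigMinSq M) * ‖x‖ ≤ ‖toLpLin 2 2 M x‖ := by
  rcases eq_or_ne x 0 with rfl | hx
  · simp
  rw [(toLpLin 2 2 M).norm_apply_eq_norm_mul_norm_apply_inv_norm_smul hx, mul_comm]
  gcongr
  exact Real.sqrt_le_iff.mpr ⟨norm_nonneg _,
    sigMinSq_le_norm_sq M (by simpa using norm_smul_inv_norm (𝕜 := ℝ) hx)⟩

theorem norm_le_sqrt_sigMaxSq_mul (x : EuclideanSpace ℝ C) :
    ‖toLpLin 2 2 M x‖ ≤ √(sigMaxSq M) * ‖x‖ := by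
  rcases eq_or_ne x 0 with rfl | hx
  · simp
  rw [(toLpLin 2 2 M).norm_apply_eq_norm_mul_norm_apply_inv_norm_smul hx, mul_comm]
  gcongr
  exact Real.le_sqrt_of_sq_le
    (norm_sq_le_sigMaxSq M (by simpa using norm_smul_inv_norm (𝕜 := ℝ) hx))

theorem sigMinSq_pos [Nonempty C] (hM : Function.Injective M.mulVec) : 0 < sigMinSq M := by
  obtain ⟨x, hx, hmin⟩ := (isCompact_image_sphere M).sInf_mem
    ((NormedSpace.sphere_nonempty.mpr zero_le_one).image _)
  rw [sigMinSq, setOf_sqNorm_mulVec_eq_image_sphere, ← hmin]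
  have hx0 : x ≠ 0 := ne_zero_of_mem_unit_sphere ⟨x, hx⟩
  have hMx : toLpLin 2 2 M x ≠ 0 := fun h =>
    hx0 (WithLp.ofLp_injective 2 (hM (by simpa [toLpLin_apply] using congrArg ofLp h)))
  positivity

end SingularValues

theorem Matrix.mulVec_injective_of_rank_eq {K m n : Type*} [Field K] [Fintype n]
    {M : Matrix m n K} (h : M.rank = Fintype.card n) : Function.Injective M.mulVec :=
  Matrix.mulVec_injective_iff.mpr <| linearIndependent_iff_card_eq_finrank_span.mpr <| by
    rw [← h]
    exact M.rank_eq_finrank_span_cols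

theorem IsSubspaceEmbedding.isSubspaceEmbeddingOn_range {K N C : Type*} [Fintype K] [Fintype N]
    [Fintype C] [DecidableEq N] [DecidableEq C] {P : Matrix K N ℝ} {A : Matrix N C ℝ} {δ : ℝ}
    (h : IsSubspaceEmbedding P A δ) :
    IsSubspaceEmbeddingOn (toLpLin 2 2 P) (LinearMap.range (toLpLin 2 2 A)) δ := by
  rintro _ ⟨x, rfl⟩
  simpa [sqNorm_eq_norm_sq, toLpLin_apply, mulVec_mulVec] using h (ofLp x)

section Augment

variable {n d : ℕ} (X : Matrix (Fin n) (Fin d) ℝ) (Y : Fin n → ℝ)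

theorem augment_mulVec_snoc_s9 (β : Fin d → ℝ) (c : ℝ) :
    augment X Y *ᵥ Fin.snoc β c = X *ᵥ β + c • Y := by
  ext i
  simp [augment, mulVec, dotProduct, Fin.sum_univ_castSucc, mul_comm]

theorem range_toLpLin_le_range_augment :
    LinearMap.range (toLpLin 2 2 X) ≤ LinearMap.range (toLpLin 2 2 (augment X Y)) := by
  rintro _ ⟨β, rfl⟩
  exact ⟨toLp 2 (Fin.snoc (ofLp β) 0), by simp [toLpLin_apply, augment_mulVec_snoc_s9]⟩

theorem toLp_mem_range_augment : toLp 2 Y ∈ LinearMap.range (toLpLin 2 2 (augment X Y)) :=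
  ⟨toLp 2 (Fin.snoc 0 1), by simp [toLpLin_apply, augment_mulVec_snoc_s9]⟩

end Augment

theorem sketched_solution_norm_bound_general {n d k : ℕ} {ε : ℝ} (hε : 0 < ε) (hε' : ε ≤ 1 / 2)
    (X : Matrix (Fin n) (Fin d) ℝ) (hrank : X.rank = d) (Y : Fin n → ℝ)
    (P : Matrix (Fin k) (Fin n) ℝ)
    (hP : IsSubspaceEmbedding P (augment X Y) (ε / 3))
    (γ ν : Fin d → ℝ)
    (hγ : ∀ β : Fin d → ℝ, sqNorm (X.mulVec γ - Y) ≤ sqNorm (X.mulVec β - Y))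
    (hν : ∀ β : Fin d → ℝ,
      sqNorm (P.mulVec (X.mulVec ν - Y)) ≤ sqNorm (P.mulVec (X.mulVec β - Y)))
    (ρ : ℝ) (hρ₀ : 0 < ρ) (hXγ : eNorm (X.mulVec γ) ≥ ρ * eNorm Y) :
    eNorm ν ≤ (1 + condNum X / ρ * ε) * eNorm γ := by
  rcases isEmpty_or_nonempty (Fin d) with hd | hd
  · rw [Subsingleton.elim ν γ]
    exact le_mul_of_one_le_left (Real.sqrt_nonneg _) <|
      le_add_of_nonneg_right <| mul_nonneg (div_nonneg (condNum_nonneg X) hρ₀.le) hε.le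
  set L := toLpLin 2 2 X
  set g := toLp 2 γ
  set v := toLp 2 ν
  set y := toLp 2 Y
  have hg : ∀ b, ‖L g - y‖ ≤ ‖L b - y‖ := fun b => by
    simpa [sqNorm_le_sqNorm_iff, L, toLpLin_apply] using hγ (ofLp b)
  have hv : ∀ b, ‖toLpLin 2 2 P (L v - y)‖ ≤ ‖toLpLin 2 2 P (L b - y)‖ := fun b => by
    simpa [sqNorm_le_sqNorm_iff, L, toLpLin_apply] using hν (ofLp b)
  have hσ : 0 < √(sigMinSq X) :=
    Real.sqrt_pos.mpr (sigMinSq_pos X (mulVec_injective_of_rank_eq (by simpa using hrank)))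
  have hbound := hP.isSubspaceEmbeddingOn_range.mul_norm_sub_le hε (by linarith) L
    (range_toLpLin_le_range_augment X Y) (toLp_mem_range_augment X Y) hg hv hρ₀.le
    (by simpa [eNorm_eq_norm, L, toLpLin_apply] using hXγ) (sqrt_sigMinSq_mul_norm_le X)
    (norm_le_sqrt_sigMaxSq_mul X)
  have hdiff : ‖v - g‖ ≤ condNum X / ρ * ε * ‖g‖ := by
    rw [condNum, show √(sigMaxSq X) / √(sigMinSq X) / ρ * ε * ‖g‖ =
      ε * (√(sigMaxSq X) * ‖g‖) / (ρ * √(sigMinSq X)) by ring, le_div_iff₀ (by positivity)]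
    linarith
  rw [eNorm_eq_norm, eNorm_eq_norm]
  calc ‖v‖ ≤ ‖g‖ + ‖v - g‖ := norm_le_insert' v g
    _ ≤ (1 + condNum X / ρ * ε) * ‖g‖ := by linarith

/-- Bound on the norm of the sketched least squares solution:
if `‖Xγ‖ ≥ ρ‖Y‖` then `‖ν‖ ≤ (1 + (κ(X)/ρ)·ε)·‖γ‖`. -/
theorem sketched_solution_norm_bound {n d k : ℕ} {ε : ℝ} (hε : 0 < ε) (hε' : ε ≤ 1 / 2)
    (X : Matrix (Fin n) (Fin d) ℝ) (hrank : X.rank = d) (Y : Fin n → ℝ)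
    (P : Matrix (Fin k) (Fin n) ℝ)
    (hP : IsSubspaceEmbedding P (augment X Y) (ε / 3))
    (γ ν : Fin d → ℝ)
    (hγ : ∀ β : Fin d → ℝ, sqNorm (X.mulVec γ - Y) ≤ sqNorm (X.mulVec β - Y))
    (hν : ∀ β : Fin d → ℝ,
      sqNorm (P.mulVec (X.mulVec ν - Y)) ≤ sqNorm (P.mulVec (X.mulVec β - Y)))
    (ρ : ℝ) (hρ₀ : 0 < ρ) (hρ₁ : ρ ≤ 1) (hXγ : eNorm (X.mulVec γ) ≥ ρ * eNorm Y) :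
    eNorm ν ≤ (1 + condNum X / ρ * ε) * eNorm γ :=
  sketched_solution_norm_bound_general hε hε' X hrank Y P hP γ ν hγ hν ρ hρ₀ hXγ
end
end
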